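/- If an assignment I is admissible for a value system ≈, then I is an interpretation (Î is total) and s ≈ Î(s) for all terms s. Moreover, if ≈ is functional, then I is surjective: for every type σ and every a ∈ D(σ) there exists a term s:σ with Î(s) = a. -/
import Mathlib


/-- Simple types over countably many base types. -/
inductive Ty : Type
  | base : ℕ → Ty
  | arr : Ty → Ty → Ty
  deriving DecidableEq

/-- Simply typed lambda terms over a countable set of typed names. -/
inductive Tm : Ty → Type
  | var : ℕ → (σ : Ty) → Tm σ
  | app : ∀ {σ τ : Ty}, Tm (Ty.arr σ τ) → Tm σ → Tm τ
  | lam : ℕ → (σ : Ty) → ∀ {τ : Ty}, Tm τ → Tm (Ty.arr σ τ)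

/-- The semantics of a value system: for each type, the type of values together with the
possible-value relation, defined by induction on types.  At a function type `σ → τ` the values
are functions from `D(σ)` (the range of the relation at `σ`, as a subtype) to values at `τ`,
and `s ≈ f` iff `s t ≈ f a` whenever `t ≈ a`. -/
def sem (Val : ℕ → Type) (R : ∀ β, Tm (Ty.base β) → Val β → Prop) :
    (σ : Ty) → (A : Type) × (Tm σ → A → Prop)
  | Ty.base β => ⟨Val β, R β⟩
  | Ty.arr σ τ =>
      ⟨{x : (sem Val R σ).1 // ∃ t : Tm σ, (sem Val R σ).2 t x} → (sem Val R τ).1,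
       fun s f => ∀ (t : Tm σ) (x : (sem Val R σ).1) (h : (sem Val R σ).2 t x),
         (sem Val R τ).2 (Tm.app s t) (f ⟨x, t, h⟩)⟩

/-- Update an assignment at the name `(m, σ0)`. -/
def updA (Val : ℕ → Type) (R : ∀ β, Tm (Ty.base β) → Val β → Prop)
    (I : ℕ → ∀ σ, (sem Val R σ).1) (m : ℕ) (σ0 : Ty) (a : (sem Val R σ0).1) :
    ℕ → ∀ σ, (sem Val R σ).1 := fun n σ =>
  if h : n = m ∧ σ = σ0 then (h.2.symm ▸ a) else I n σ

/-- Update a substitution at the name `(x, σ0)`. -/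
def updS (θ : ℕ → (σ : Ty) → Option (Tm σ)) (x : ℕ) (σ0 : Ty) (t : Tm σ0) :
    ℕ → (σ : Ty) → Option (Tm σ) := fun n σ =>
  if h : n = x ∧ σ = σ0 then some (h.2.symm ▸ t) else θ n σ

/-- The (partial) evaluation function of an assignment into the domains of a value system,
presented as an inductively defined evaluation relation.  The clause for `λ`-abstraction
requires the value to lie in `D(στ)` and to agree with the evaluation of the body under all
updates of the assignment by elements of `D(σ)`. -/
inductive VEval (Val : ℕ → Type) (R : ∀ β, Tm (Ty.base β) → Val β → Prop) :
    (ℕ → ∀ σ, (sem Val R σ).1) → ∀ σ : Ty, Tm σ → (sem Val R σ).1 → Prop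
  | var : ∀ (I : ℕ → ∀ σ, (sem Val R σ).1) (n : ℕ) (σ : Ty),
      VEval Val R I σ (Tm.var n σ) (I n σ)
  | app : ∀ {I : ℕ → ∀ σ, (sem Val R σ).1} {σ τ : Ty} {s : Tm (Ty.arr σ τ)} {t : Tm σ}
      {f : (sem Val R (Ty.arr σ τ)).1} {a : (sem Val R σ).1} (h : ∃ u : Tm σ, (sem Val R σ).2 u a),
      VEval Val R I (Ty.arr σ τ) s f → VEval Val R I σ t a →
      VEval Val R I τ (Tm.app s t) (f ⟨a, h⟩)
  | lam : ∀ {I : ℕ → ∀ σ, (sem Val R σ).1} (n : ℕ) (σ : Ty) {τ : Ty} (s : Tm τ)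
      (f : (sem Val R (Ty.arr σ τ)).1),
      (∃ u : Tm (Ty.arr σ τ), (sem Val R (Ty.arr σ τ)).2 u f) →
      (∀ (a : (sem Val R σ).1) (h : ∃ u : Tm σ, (sem Val R σ).2 u a),
        VEval Val R (updA Val R I n σ a) τ s (f ⟨a, h⟩)) →
      VEval Val R I (Ty.arr σ τ) (Tm.lam n σ s) f

section Aux

variable (Val : ℕ → Type) (R : ∀ β, Tm (Ty.base β) → Val β → Prop)

lemma updA_same (J : ℕ → ∀ σ, (sem Val R σ).1) (n : ℕ) (σ : Ty) (x : (sem Val R σ).1) :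
    updA Val R J n σ x n σ = x := by
  unfold updA
  rw [dif_pos ⟨rfl, rfl⟩]

lemma updA_ne (J : ℕ → ∀ σ, (sem Val R σ).1) (n : ℕ) (σ : Ty) (x : (sem Val R σ).1)
    (m : ℕ) (ρ : Ty) (h : ¬(m = n ∧ ρ = σ)) : updA Val R J n σ x m ρ = J m ρ := by
  unfold updA
  rw [dif_neg h]

lemma updS_same (θ : ℕ → (σ : Ty) → Option (Tm σ)) (n : ℕ) (σ : Ty) (t : Tm σ) :
    updS θ n σ t n σ = some t := by
  unfold updS
  rw [dif_pos ⟨rfl, rfl⟩]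

lemma updS_ne (θ : ℕ → (σ : Ty) → Option (Tm σ)) (n : ℕ) (σ : Ty) (t : Tm σ)
    (m : ℕ) (ρ : Ty) (h : ¬(m = n ∧ ρ = σ)) : updS θ n σ t m ρ = θ m ρ := by
  unfold updS
  rw [dif_neg h]

/-- The evaluation relation is functional. -/
lemma veval_det {J : ℕ → ∀ σ, (sem Val R σ).1} {σ : Ty} {s : Tm σ}
    {a b : (sem Val R σ).1} (h1 : VEval Val R J σ s a) (h2 : VEval Val R J σ s b) :
    a = b := by
  induction h1 with
  | var J n σ => cases h2; rfl
  | app h hf ha ihf iha =>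
      cases h2 with
      | app h' hf' ha' =>
          obtain rfl := ihf hf'
          obtain rfl := iha ha'
          rfl
  | lam n σ s f hex hb ih =>
      cases h2 with
      | lam _ _ _ g hex' hb' =>
          funext x
          exact ih x.1 x.2 (hb' x.1 x.2)

/-- The possible-value relation only depends on the normal form of the term. -/
lemma sem_nf (nf : ∀ {σ : Ty}, Tm σ → Tm σ)
    (hN2 : ∀ {σ τ : Ty} (s : Tm (Ty.arr σ τ)) (t : Tm σ),
      nf (Tm.app (nf s) t) = nf (Tm.app s t))
    (hR : ∀ β (s : Tm (Ty.base β)) (a : Val β), R β s a ↔ R β (nf s) a) :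
    ∀ (σ : Ty) (s s' : Tm σ), nf s = nf s' → ∀ a : (sem Val R σ).1,
      (sem Val R σ).2 s a ↔ (sem Val R σ).2 s' a := by
  intro σ
  induction σ with
  | base β =>
      intro s s' h a
      show R β s a ↔ R β s' a
      rw [hR β s a, h, ← hR β s' a]
  | arr σ τ ihσ ihτ =>
      intro s s' h a
      have key : ∀ t : Tm σ, nf (Tm.app s t) = nf (Tm.app s' t) := by
        intro t
        rw [← hN2 s t, h, hN2 s' t]
      constructor
      · intro hs t x ht
        exact (ihτ _ _ (key t) _).mp (hs t x ht)
      · intro hs t x ht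
        exact (ihτ _ _ (key t) _).mpr (hs t x ht)

/-- If the relation is functional at base types, it is functional at all types. -/
lemma sem_fun (hfun : ∀ β (s : Tm (Ty.base β)) (a b : Val β), R β s a → R β s b → a = b) :
    ∀ (σ : Ty) (s : Tm σ) (a b : (sem Val R σ).1),
      (sem Val R σ).2 s a → (sem Val R σ).2 s b → a = b := by
  intro σ
  induction σ with
  | base β => exact hfun β
  | arr σ τ ihσ ihτ =>
      intro s f g hf hg
      funext x
      obtain ⟨x, t, ht⟩ := x
      exact ihτ (Tm.app s t) _ _ (hf t x ht) (hg t x ht)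

/-- Main substitution lemma. -/
lemma main_lemma (nf : ∀ {σ : Ty}, Tm σ → Tm σ)
    (hN2 : ∀ {σ τ : Ty} (s : Tm (Ty.arr σ τ)) (t : Tm σ),
      nf (Tm.app (nf s) t) = nf (Tm.app s t))
    (sub : (ℕ → (σ : Ty) → Option (Tm σ)) → ∀ {σ : Ty}, Tm σ → Tm σ)
    (hS1 : ∀ θ (n : ℕ) (σ : Ty), sub θ (Tm.var n σ) = (θ n σ).getD (Tm.var n σ))
    (hS2 : ∀ θ {σ τ : Ty} (s : Tm (Ty.arr σ τ)) (t : Tm σ),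
      sub θ (Tm.app s t) = Tm.app (sub θ s) (sub θ t))
    (hS3 : ∀ θ (x : ℕ) (σ : Ty) {τ : Ty} (s : Tm τ) (t : Tm σ),
      nf (Tm.app (sub θ (Tm.lam x σ s)) t) = nf (sub (updS θ x σ t) s))
    (hR : ∀ β (s : Tm (Ty.base β)) (a : Val β), R β s a ↔ R β (nf s) a) :
    ∀ {σ : Ty} (s : Tm σ) (J : ℕ → ∀ σ, (sem Val R σ).1)
      (θ : ℕ → (σ : Ty) → Option (Tm σ)),
      (∀ (n : ℕ) (ρ : Ty), (sem Val R ρ).2 ((θ n ρ).getD (Tm.var n ρ)) (J n ρ)) →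
      ∃ a : (sem Val R σ).1, VEval Val R J σ s a ∧ (sem Val R σ).2 (sub θ s) a := by
  intro σ s
  induction s with
  | var n σ =>
      intro J θ hJ
      refine ⟨J n σ, VEval.var J n σ, ?_⟩
      rw [hS1]
      exact hJ n σ
  | app s t ihs iht =>
      intro J θ hJ
      obtain ⟨f, hf1, hf2⟩ := ihs J θ hJ
      obtain ⟨a, ha1, ha2⟩ := iht J θ hJ
      refine ⟨f ⟨a, sub θ t, ha2⟩, VEval.app ⟨sub θ t, ha2⟩ hf1 ha1, ?_⟩
      rw [hS2]
      exact hf2 (sub θ t) a ha2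
  | lam n σ s ih =>
      intro J θ hJ
      rename_i τ
      have key : ∀ (x : (sem Val R σ).1) (t : Tm σ), (sem Val R σ).2 t x →
          ∃ b : (sem Val R τ).1, VEval Val R (updA Val R J n σ x) τ s b ∧
            (sem Val R τ).2 (sub (updS θ n σ t) s) b := by
        intro x t ht
        apply ih (updA Val R J n σ x) (updS θ n σ t)
        intro m ρ
        by_cases h : m = n ∧ ρ = σ
        · obtain ⟨rfl, rfl⟩ := h
          rw [updA_same, updS_same]
          exact ht
        · rw [updA_ne _ _ _ _ _ _ _ _ h, updS_ne _ _ _ _ _ _ h]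
          exact hJ m ρ
      set f : (sem Val R (Ty.arr σ τ)).1 :=
        fun x => (key x.1 x.2.choose x.2.choose_spec).choose with hfdef
      have hf_eval : ∀ x, VEval Val R (updA Val R J n σ x.1) τ s (f x) :=
        fun x => (key x.1 x.2.choose x.2.choose_spec).choose_spec.1
      have hrel : (sem Val R (Ty.arr σ τ)).2 (sub θ (Tm.lam n σ s)) f := by
        intro t x ht
        obtain ⟨b, hb1, hb2⟩ := key x t ht
        have hbf : b = f ⟨x, t, ht⟩ := veval_det Val R hb1 (hf_eval ⟨x, t, ht⟩)
        exact (sem_nf Val R nf hN2 hR τ _ _ (hS3 θ n σ s t).symm _).mp (hbf ▸ hb2)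
      exact ⟨f, VEval.lam n σ s f ⟨sub θ (Tm.lam n σ s), hrel⟩
        (fun a h => hf_eval ⟨a, h⟩), hrel⟩

end Aux

/-- If an assignment `I` is admissible for a value system `≈`, then `I` is an
interpretation (`Î` is total) and `s ≈ Î(s)` for all terms `s`; moreover if `≈` is functional
then `I` is surjective. -/
theorem stmt3
    (nf : ∀ {σ : Ty}, Tm σ → Tm σ)
    (hN1 : ∀ {σ : Ty} (s : Tm σ), nf (nf s) = nf s)
    (hN2 : ∀ {σ τ : Ty} (s : Tm (Ty.arr σ τ)) (t : Tm σ),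
      nf (Tm.app (nf s) t) = nf (Tm.app s t))
    (sub : (ℕ → (σ : Ty) → Option (Tm σ)) → ∀ {σ : Ty}, Tm σ → Tm σ)
    (hS1 : ∀ θ (n : ℕ) (σ : Ty), sub θ (Tm.var n σ) = (θ n σ).getD (Tm.var n σ))
    (hS2 : ∀ θ {σ τ : Ty} (s : Tm (Ty.arr σ τ)) (t : Tm σ),
      sub θ (Tm.app s t) = Tm.app (sub θ s) (sub θ t))
    (hS3 : ∀ θ (x : ℕ) (σ : Ty) {τ : Ty} (s : Tm τ) (t : Tm σ),
      nf (Tm.app (sub θ (Tm.lam x σ s)) t) = nf (sub (updS θ x σ t) s))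
    (hS4 : ∀ {σ : Ty} (s : Tm σ), nf (sub (fun _ _ => none) s) = nf s)
    (Val : ℕ → Type) (R : ∀ β, Tm (Ty.base β) → Val β → Prop)
    (hR : ∀ β (s : Tm (Ty.base β)) (a : Val β), R β s a ↔ R β (nf s) a)
    (I : ℕ → ∀ σ, (sem Val R σ).1)
    (hadm : ∀ (n : ℕ) (σ : Ty), (sem Val R σ).2 (Tm.var n σ) (I n σ)) :
    (∀ (σ : Ty) (s : Tm σ), ∃ a : (sem Val R σ).1, VEval Val R I σ s a ∧ (sem Val R σ).2 s a) ∧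
    ((∀ β (s : Tm (Ty.base β)) (a b : Val β), R β s a → R β s b → a = b) →
      ∀ (σ : Ty) (a : (sem Val R σ).1), (∃ u : Tm σ, (sem Val R σ).2 u a) →
        ∃ s : Tm σ, VEval Val R I σ s a) := by
  have part1 : ∀ (σ : Ty) (s : Tm σ),
      ∃ a : (sem Val R σ).1, VEval Val R I σ s a ∧ (sem Val R σ).2 s a := by
    intro σ s
    obtain ⟨a, h1, h2⟩ := main_lemma Val R nf hN2 sub hS1 hS2 hS3 hR s I
      (fun _ _ => none) (fun n ρ => hadm n ρ)
    refine ⟨a, h1, ?_⟩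
    exact (sem_nf Val R nf hN2 hR σ _ s (hS4 s) a).mp h2
  refine ⟨part1, ?_⟩
  intro hfun σ a ⟨u, hu⟩
  obtain ⟨b, hb1, hb2⟩ := part1 σ u
  obtain rfl : a = b := sem_fun Val R hfun σ u a b hu hb2
  exact ⟨u, hb1⟩
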